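/- For every odd integer n ≥ 5, the wheel graph W_n is not word-representable. -/

import Mathlib

/-- The wheel graph `W n`: a cycle on the `n` vertices `some a`, `a : Fin n` (with `a` and `b`
adjacent when their indices differ by one modulo `n`), together with the hub `none`,
adjacent to all cycle vertices. -/
def wheel (n : ℕ) : SimpleGraph (Option (Fin n)) where
  Adj x y := x ≠ y ∧ (x = none ∨ y = none ∨ ∃ a b : Fin n,
      x = some a ∧ y = some b ∧ ((a.val + 1) % n = b.val ∨ (b.val + 1) % n = a.val))
  symm := by
    constructor
    rintro x y ⟨hxy, h⟩
    refine ⟨hxy.symm, ?_⟩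
    rcases h with h | h | ⟨a, b, ha, hb, hab⟩
    · exact Or.inr (Or.inl h)
    · exact Or.inl h
    · exact Or.inr (Or.inr ⟨b, a, hb, ha, hab.symm⟩)
  loopless := by constructor; rintro x ⟨h, -⟩; exact h rfl

/-- Two letters `x ≠ y` alternate in the word `w` if, after deleting all other letters,
consecutive letters are always distinct (i.e. the result is `xyxy...` or `yxyx...`). -/
def Alternate {V : Type*} [DecidableEq V] (w : List V) (x y : V) : Prop :=
  (w.filter (fun z => z = x ∨ z = y)).Chain' (· ≠ ·)

/-- A graph is word-representable if some word over its vertex alphabet, containing every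
vertex, is such that two distinct letters alternate iff they are adjacent. -/
def WordRepresentable {V : Type*} [DecidableEq V] (G : SimpleGraph V) : Prop :=
  ∃ w : List V, (∀ v : V, v ∈ w) ∧ ∀ x y : V, x ≠ y → (Alternate w x y ↔ G.Adj x y)

/-!
Write `d_xy(p)` for the number of `x`s minus the number of `y`s in a prefix `p` of the word.
Two letters `x ≠ y` alternate iff `d_xy` takes at most two consecutive values along the prefixes.
If `x` and `y` both alternate with `h`, and `p₀` is the prefix ending with the first `h`, then
`d_xy` never drops more than one below `d_xy(p₀)`; so `x` and `y` alternate iff `d_xy` or `d_yx`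
is maximal at `p₀`. As `d_xz = d_xy + d_yz`, the neighbourhood of `h` is therefore the
comparability graph of a transitive relation. As rim vertices two steps apart are not adjacent,
consecutive rim edges must then be oriented in opposite directions, impossible around an odd cycle.
-/

open List

section Words

variable {α : Type*} [DecidableEq α]

def countDiff (x y : α) (u : List α) : ℤ := u.count x - u.count y

theorem countDiff_add_countDiff (x y z : α) (u : List α) :
    countDiff x y u + countDiff y z u = countDiff x z u := by
  unfold countDiff; ring

theorem countDiff_swap (x y : α) (u : List α) : countDiff y x u = -countDiff x y u := by
  unfold countDiff; ring

omit [DecidableEq α] in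
theorem forall_prefix_cons_iff {P : List α → Prop} {a : α} {t : List α} :
    (∀ p, p <+: a :: t → P p) ↔ P [] ∧ ∀ p, p <+: t → P (a :: p) := by
  simp only [prefix_cons_iff, or_imp, forall_and, forall_eq, forall_exists_index, and_imp]
  exact and_congr_right' ⟨fun h p hp => h _ p rfl hp, fun h _ p hq hp => hq ▸ h p hp⟩

theorem filter_eq_or_comm (x y : α) (w : List α) :
    w.filter (fun z => z = y ∨ z = x) = w.filter (fun z => z = x ∨ z = y) :=
  filter_congr fun z _ => by simp only [or_comm]

omit [DecidableEq α] in
theorem isChain_ne_iff_of_forall_mem_pair {x y : α} (hxy : x ≠ y) {l : List α}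
    (hl : ∀ z ∈ l, z = x ∨ z = y) :
    l.IsChain (· ≠ ·) ↔ (x :: l).IsChain (· ≠ ·) ∨ (y :: l).IsChain (· ≠ ·) := by
  refine ⟨fun h => ?_, fun h => h.elim IsChain.tail IsChain.tail⟩
  cases l with
  | nil => simp
  | cons b l =>
    rcases hl b mem_cons_self with rfl | rfl
    · exact Or.inr (isChain_cons_cons.mpr ⟨hxy.symm, h⟩)
    · exact Or.inl (isChain_cons_cons.mpr ⟨hxy, h⟩)

theorem isChain_cons_filter_iff {x y : α} (hxy : x ≠ y) (w : List α) :
    (x :: w.filter (fun z => z = x ∨ z = y)).IsChain (· ≠ ·) ↔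
      ∀ p, p <+: w → -1 ≤ countDiff x y p ∧ countDiff x y p ≤ 0 := by
  induction w generalizing x y with
  | nil => simp [countDiff]
  | cons a t ih =>
    rw [forall_prefix_cons_iff]
    by_cases hax : a = x
    · subst hax
      rw [filter_cons_of_pos (by simp)]
      simp only [isChain_cons_cons, ne_eq, not_true_eq_false, false_and, false_iff]
      intro h
      simpa [countDiff, hxy] using h.2 [] nil_prefix
    by_cases hay : a = y
    · subst hay
      rw [filter_cons_of_pos (by simp), isChain_cons_cons, ← filter_eq_or_comm, ih hxy.symm]
      simp only [ne_eq, hxy, not_false_eq_true, true_and]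
      rw [and_iff_right (by simp [countDiff])]
      refine forall₂_congr fun p _ => ?_
      simp [countDiff, hax]
      omega
    · rw [filter_cons_of_neg (by simp [hax, hay]), ih hxy]
      simp [countDiff, hax, hay]

theorem alternate_iff {x y : α} (hxy : x ≠ y) (w : List α) :
    Alternate w x y ↔ ∀ p q, p <+: w → q <+: w → countDiff x y p ≤ countDiff x y q + 1 := by
  have hpair : ∀ z ∈ w.filter (fun z => z = x ∨ z = y), z = x ∨ z = y := fun z hz => by
    simpa using (mem_filter.mp hz).2
  rw [Alternate, Chain', isChain_ne_iff_of_forall_mem_pair hxy hpair, isChain_cons_filter_iff hxy,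
    ← filter_eq_or_comm, isChain_cons_filter_iff hxy.symm]
  simp only [countDiff_swap x y]
  have h0 : countDiff x y [] = 0 := by simp [countDiff]
  constructor
  · rintro (h | h) p q hp hq
    · linarith [h p hp, h q hq]
    · linarith [h p hp, h q hq]
  · intro h
    have hbound : ∀ p, p <+: w → -1 ≤ countDiff x y p ∧ countDiff x y p ≤ 1 := fun p hp =>
      ⟨by linarith [h [] p nil_prefix hp], by linarith [h p [] hp nil_prefix]⟩
    by_contra! hne
    obtain ⟨⟨p, hp, hp'⟩, ⟨q, hq, hq'⟩⟩ := hne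
    have := hbound p hp
    have := hbound q hq
    have := h p q hp hq
    omega

section Hub

variable {x y h : α} {w u : List α}

theorem countDiff_le_of_alternate_hub (hxh : x ≠ h) (hyh : y ≠ h) (hx : Alternate w x h)
    (hy : Alternate w y h) (hu : u ++ [h] <+: w) {q : List α} (hq : q <+: w) :
    countDiff x y (u ++ [h]) ≤ countDiff x y q + 1 := by
  rw [alternate_iff hxh] at hx
  rw [alternate_iff hyh] at hy
  have hxq := hx u q ((prefix_append u [h]).trans hu) hq
  have hyq := hy q (u ++ [h]) hq hu
  have hlast : countDiff x h (u ++ [h]) = countDiff x h u - 1 := by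
    simp [countDiff, hxh.symm]; ring
  simp only [← countDiff_add_countDiff x h y, countDiff_swap y h] at hyq ⊢
  linarith

theorem alternate_iff_of_alternate_hub (hxy : x ≠ y) (hxh : x ≠ h) (hyh : y ≠ h)
    (hx : Alternate w x h) (hy : Alternate w y h) (hu : u ++ [h] <+: w) :
    Alternate w x y ↔ (∀ q, q <+: w → countDiff x y q ≤ countDiff x y (u ++ [h])) ∨
      (∀ q, q <+: w → countDiff y x q ≤ countDiff y x (u ++ [h])) := by
  have hxy_le := fun q (hq : q <+: w) => countDiff_le_of_alternate_hub hxh hyh hx hy hu hq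
  have hyx_le := fun q (hq : q <+: w) => countDiff_le_of_alternate_hub hyh hxh hy hx hu hq
  rw [alternate_iff hxy]
  simp only [countDiff_swap x y] at hyx_le ⊢
  constructor
  · intro hosc
    by_contra! hne
    obtain ⟨⟨p, hp, hp'⟩, ⟨q, hq, hq'⟩⟩ := hne
    linarith [hosc p q hp hq]
  · rintro (hmax | hmin) p q hp hq
    · linarith [hmax p hp, hxy_le q hq]
    · linarith [hmin q hq, hyx_le p hp]

end Hub

end Words

theorem WordRepresentable.exists_isTrans_adj_iff {V : Type*} [DecidableEq V]
    {G : SimpleGraph V} (hG : WordRepresentable G) (h : V) :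
    ∃ r : V → V → Prop, IsTrans V r ∧
      ∀ x y, G.Adj h x → G.Adj h y → x ≠ y → (G.Adj x y ↔ r x y ∨ r y x) := by
  obtain ⟨w, hmem, hw⟩ := hG
  obtain ⟨u, t, rfl⟩ := append_of_mem (hmem h)
  have hu : u ++ [h] <+: u ++ h :: t := ⟨t, by simp⟩
  refine ⟨fun x y => ∀ q, q <+: u ++ h :: t → countDiff x y q ≤ countDiff x y (u ++ [h]),
    ⟨fun a b c hab hbc q hq => ?_⟩, fun x y hx hy hxy => ?_⟩
  · simp only [← countDiff_add_countDiff a b c]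
    linarith [hab q hq, hbc q hq]
  · have halt : ∀ z, G.Adj h z → Alternate (u ++ h :: t) z h := fun z hz =>
      (hw z h hz.ne').mpr hz.symm
    rw [← hw x y hxy, alternate_iff_of_alternate_hub hxy hx.ne' hy.ne' (halt x hx) (halt y hy) hu]

theorem IsTrans.even_of_periodic {α : Type*} {r : α → α → Prop} [IsTrans α r] {v : ℕ → α}
    {n : ℕ} (hv : Function.Periodic v n) (hcomp : ∀ j, r (v j) (v (j + 1)) ∨ r (v (j + 1)) (v j))
    (hincomp : ∀ j, ¬ r (v j) (v (j + 2)) ∧ ¬ r (v (j + 2)) (v j)) : Even n := by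
  set P : ℕ → Prop := fun j => r (v j) (v (j + 1)) with hP
  have hflip : ∀ j, P (j + 1) ↔ ¬ P j := fun j =>
    ⟨fun h₂ h₁ => (hincomp j).1 (_root_.trans h₁ h₂), fun h₁ => (hcomp (j + 1)).resolve_right
      fun h₂ => (hincomp j).2 (_root_.trans h₂ ((hcomp j).resolve_left h₁))⟩
  have hparity : ∀ m, P m ↔ (P 0 ↔ Even m) := by
    intro m
    induction m with
    | zero => simp
    | succ m ih => rw [hflip, ih, Nat.even_add_one]; tauto
  have hPn : P n ↔ P 0 := by
    have h0 : v n = v 0 := by simpa using hv 0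
    have h1 : v (n + 1) = v 1 := by simpa [add_comm] using hv 1
    simp only [hP, h0, h1, zero_add]
  have := hparity n
  tauto

theorem Nat.add_mod_ne_mod {n j d : ℕ} (hd : 0 < d) (hdn : d < n) : (j + d) % n ≠ j % n := by
  intro h
  have : d ≡ 0 [MOD n] := Nat.ModEq.add_left_cancel' j h
  rw [Nat.ModEq, Nat.mod_eq_of_lt hdn, Nat.zero_mod] at this
  omega

section Wheel

variable {n : ℕ}

theorem wheel_adj_none_some (a : Fin n) : (wheel n).Adj none (some a) :=
  ⟨by simp, Or.inl rfl⟩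

theorem wheel_adj_some_some {a b : Fin n} :
    (wheel n).Adj (some a) (some b) ↔
      a ≠ b ∧ ((a.val + 1) % n = b.val ∨ (b.val + 1) % n = a.val) := by
  simp [wheel]

variable [NeZero n]

theorem wheel_adj_ofNat_succ (hn : 2 ≤ n) (j : ℕ) :
    (wheel n).Adj (some (Fin.ofNat n j)) (some (Fin.ofNat n (j + 1))) := by
  rw [wheel_adj_some_some, ne_eq, Fin.ext_iff]
  simp only [Fin.val_ofNat, Nat.mod_add_mod, true_or, and_true]
  exact (Nat.add_mod_ne_mod one_pos (by omega)).symm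

theorem wheel_not_adj_ofNat_add_two (hn : 4 ≤ n) (j : ℕ) :
    ¬ (wheel n).Adj (some (Fin.ofNat n j)) (some (Fin.ofNat n (j + 2))) := by
  rw [wheel_adj_some_some]
  simp only [Fin.val_ofNat, Nat.mod_add_mod]
  rintro ⟨-, h | h⟩
  · exact Nat.add_mod_ne_mod one_pos (by omega) h.symm
  · exact Nat.add_mod_ne_mod (d := 3) (by norm_num) (by omega) h

end Wheel

/-- For every odd integer `n ≥ 5`, the wheel graph `W n` is not word-representable. -/
theorem wheel_odd_not_word_representable (n : ℕ) (h5 : 5 ≤ n) (hodd : Odd n) :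
    ¬ WordRepresentable (wheel n) := by
  intro hW
  have : NeZero n := ⟨by omega⟩
  obtain ⟨r, hr, hiff⟩ := hW.exists_isTrans_adj_iff none
  have hrim : ∀ a b : Fin n, some a ≠ some b →
      ((wheel n).Adj (some a) (some b) ↔ r (some a) (some b) ∨ r (some b) (some a)) :=
    fun a b => hiff _ _ (wheel_adj_none_some a) (wheel_adj_none_some b)
  refine Nat.not_even_iff_odd.mpr hodd
    (IsTrans.even_of_periodic (r := r) (v := fun j => some (Fin.ofNat n j)) (fun j => ?_)
      (fun j => ?_) (fun j => ?_))
  · simp [Fin.ext_iff]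
  · have hadj := wheel_adj_ofNat_succ (n := n) (by omega) j
    exact (hrim _ _ hadj.ne).mp hadj
  · have hne : some (Fin.ofNat n j) ≠ some (Fin.ofNat n (j + 2)) := by
      simpa [Fin.ext_iff] using (Nat.add_mod_ne_mod (n := n) (j := j) two_pos (by omega)).symm
    exact not_or.mp (mt (hrim _ _ hne).mpr (wheel_not_adj_ofNat_add_two (by omega) j))
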